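/- Let Γ be a well-rounded sublattice of Λ_h with index J and minimum M. Then the angle θ = θ(Γ) between minimal basis vectors satisfies cos θ = √(4M² − 3J²)/(2M). In particular, 4M² ≥ 3J², and 4M² − 3J² must be a perfect square of a rational number times 4M² for cos θ to be rational. -/
import Mathlib


theorem stmt_17 (M J : ℤ) (hM : 0 < M) (hJ : 0 < J) (θ : ℝ)
    (hθ1 : Real.pi / 3 ≤ θ) (hθ2 : θ < Real.pi / 2)
    (hdet : (M : ℝ) * Real.sin θ = (J : ℝ) * (Real.sqrt 3 / 2)) :
    3 * J ^ 2 ≤ 4 * M ^ 2 ∧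
      Real.cos θ = Real.sqrt (4 * (M : ℝ) ^ 2 - 3 * (J : ℝ) ^ 2) / (2 * M) := by
  have hM' : (0:ℝ) < (M:ℝ) := by exact_mod_cast hM
  have hsq : (M:ℝ)^2 * Real.sin θ ^ 2 = 3 * (J:ℝ)^2 / 4 := by
    have h := congrArg (fun x => x^2) hdet
    simp only [mul_pow, div_pow] at h
    rw [Real.sq_sqrt (by norm_num : (0:ℝ) ≤ 3)] at h
    linarith
  have h1r : 3*(J:ℝ)^2 ≤ 4*(M:ℝ)^2 := by
    nlinarith [Real.sin_sq_le_one θ, sq_nonneg (M:ℝ)]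
  have hpi := Real.pi_pos
  have hcosnn : 0 ≤ Real.cos θ :=
    Real.cos_nonneg_of_mem_Icc ⟨by linarith, le_of_lt hθ2⟩
  have hcos2 : Real.cos θ ^ 2 = (4*(M:ℝ)^2 - 3*(J:ℝ)^2)/(4*(M:ℝ)^2) := by
    rw [Real.cos_sq']
    field_simp
    linear_combination (-4 : ℝ) * hsq
  constructor
  · exact_mod_cast h1r
  · rw [← Real.sqrt_sq hcosnn, hcos2,
      Real.sqrt_div (by linarith : (0:ℝ) ≤ 4*(M:ℝ)^2 - 3*(J:ℝ)^2),
      show (4*(M:ℝ)^2) = (2*(M:ℝ))^2 by ring,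
      Real.sqrt_sq (by positivity)]
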